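/- If L ≥ 2 is even, then the minimum cardinality of a 1-cycle S of the L×L Klein-bottle lattice whose intersection with the seam has odd cardinality is exactly L+1; in particular every homologically nontrivial cycle in the seam-crossing class has at least L+1 edges (one more than the corresponding shortest cycle of length L on the L×L toric lattice), and this bound is attained. -/

import Mathlib

/-- The second endpoint of the horizontal edge based at `p` in the `L × L` Klein-bottle
lattice: identifying `ZMod L` with `{0, …, L-1}`, we have `φ(x, y) = (x+1, y)` if
`x ≠ L-1` (i.e. `x ≠ -1` in `ZMod L`) and `φ(L-1, y) = (0, L-1-y)` (the
orientation-reversing identification of the Klein bottle, with `L-1-y = -1-y` in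
`ZMod L`). -/
def kleinPhi (L : ℕ) (p : ZMod L × ZMod L) : ZMod L × ZMod L :=
  if p.1 = -1 then (0, -1 - p.2) else (p.1 + 1, p.2)

/-- The endpoints of an edge of the Klein-bottle lattice: the horizontal edge `(p, 0)`
has endpoints `p` and `kleinPhi L p`; the vertical edge `(p, 1)` has endpoints `p` and
`p + (0, 1)`. -/
def kleinEnds (L : ℕ) (e : (ZMod L × ZMod L) × Fin 2) : Set (ZMod L × ZMod L) :=
  if e.2 = 0 then {e.1, kleinPhi L e.1} else {e.1, e.1 + (0, 1)}

/-- `S` is a 1-cycle of the Klein-bottle lattice: every vertex is an endpoint of an even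
number of edges of `S`. -/
def kleinIsCycle (L : ℕ) (S : Set ((ZMod L × ZMod L) × Fin 2)) : Prop :=
  ∀ v : ZMod L × ZMod L, Even {e | e ∈ S ∧ v ∈ kleinEnds L e}.ncard

/-- The seam of the Klein-bottle lattice: the `L` horizontal edges `h(L-1, y)`,
`y ∈ ZMod L` (with `L-1 = -1` in `ZMod L`). -/
def kleinSeam (L : ℕ) : Set ((ZMod L × ZMod L) × Fin 2) :=
  {e | ∃ y : ZMod L, e = ((-1, y), 0)}

/-!
Over `ZMod 2`, an edge set is a 1-cycle iff it pairs to zero with every coboundary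
`e ↦ f (src e) + f (tgt e)`. For `f` the indicator of column `x`, this says that the horizontal
edges based in columns `x - 1` and `x` are equally many mod 2; the seam is column `-1`, so a cycle
with odd seam count has an odd number, hence at least one, of horizontal edges in each of the `L`
columns. For `f (x, y) = y mod 2`, well defined because `L` is even, exactly the vertical edges
and the seam edges change `f`, so the cycle also has an odd number of vertical edges: at least
`L + 1` edges in all. Conversely the row `y = -1` crosses the seam into `(0, 0)`, and the vertical
edge from `(0, -1)` closes it into a cycle with `L + 1` edges.
-/

open Finset

theorem even_card_incident_iff_sum_coboundary_eq_zero {V E : Type*} [Fintype V] [DecidableEq V]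
    (src tgt : E → V) (hne : ∀ e, src e ≠ tgt e) (T : Finset E) :
    (∀ v, Even #{e ∈ T | v = src e ∨ v = tgt e}) ↔
      ∀ f : V → ZMod 2, ∑ e ∈ T, (f (src e) + f (tgt e)) = 0 := by
  have hdeg : ∀ v, (#{e ∈ T | v = src e ∨ v = tgt e} : ZMod 2) =
      ∑ e ∈ T, ((if src e = v then 1 else 0) + (if tgt e = v then 1 else 0)) := by
    intro v
    rw [natCast_card_filter]
    refine sum_congr rfl fun e _ => ?_
    grind [hne e]
  simp_rw [← ZMod.natCast_eq_zero_iff_even, hdeg]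
  constructor
  · intro h f
    calc ∑ e ∈ T, (f (src e) + f (tgt e))
        = ∑ v, f v *
            ∑ e ∈ T, ((if src e = v then 1 else 0) + (if tgt e = v then 1 else 0)) := by
          simp_rw [mul_sum, mul_add, mul_ite, mul_one, mul_zero]
          rw [sum_comm]
          simp [sum_add_distrib]
      _ = 0 := by simp [h]
  · intro h v
    simpa using h fun w => if w = v then 1 else 0

theorem ZMod.forall_of_forall_add_one {n : ℕ} [NeZero n] {P : ZMod n → Prop} {a : ZMod n}
    (ha : P a) (hsucc : ∀ x, P x → P (x + 1)) (x : ZMod n) : P x := by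
  have hk : ∀ k : ℕ, P (a + k) := by
    intro k
    induction k with
    | zero => simpa using ha
    | succ k ih => simpa [add_assoc] using hsucc _ ih
  simpa using hk (x - a).val

section KleinLattice

variable {L : ℕ}

def kleinTarget (L : ℕ) (e : (ZMod L × ZMod L) × Fin 2) : ZMod L × ZMod L :=
  if e.2 = 0 then kleinPhi L e.1 else e.1 + (0, 1)

lemma kleinEnds_eq (e : (ZMod L × ZMod L) × Fin 2) : kleinEnds L e = {e.1, kleinTarget L e} := by
  unfold kleinEnds kleinTarget
  split_ifs <;> rfl

lemma kleinPhi_of_ne {p : ZMod L × ZMod L} (h : p.1 ≠ -1) : kleinPhi L p = (p.1 + 1, p.2) :=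
  if_neg h

lemma kleinPhi_of_eq {p : ZMod L × ZMod L} (h : p.1 = -1) : kleinPhi L p = (0, -1 - p.2) :=
  if_pos h

lemma kleinTarget_fst (e : (ZMod L × ZMod L) × Fin 2) :
    (kleinTarget L e).1 = if e.2 = 0 then e.1.1 + 1 else e.1.1 := by
  unfold kleinTarget kleinPhi
  split_ifs <;> simp_all

def kleinColumn (T : Finset ((ZMod L × ZMod L) × Fin 2)) (x : ZMod L) :
    Finset ((ZMod L × ZMod L) × Fin 2) :=
  {e ∈ T | e.2 = 0 ∧ e.1.1 = x}

lemma ncard_coe_inter_kleinSeam (T : Finset ((ZMod L × ZMod L) × Fin 2)) :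
    (↑T ∩ kleinSeam L).ncard = #(kleinColumn T (-1)) := by
  rw [← Set.ncard_coe_finset]
  congr 1
  ext ⟨⟨a, b⟩, i⟩
  simp [kleinSeam, kleinColumn, and_comm]

def kleinWitness (L : ℕ) [NeZero L] : Finset ((ZMod L × ZMod L) × Fin 2) :=
  insert ((0, -1), 1) (univ.image fun x : ZMod L => ((x, -1), 0))

lemma card_kleinWitness [NeZero L] : #(kleinWitness L) = L + 1 := by
  rw [kleinWitness, card_insert_of_notMem (by simp),
    card_image_of_injective _ fun x y h => by simpa using h, card_univ, ZMod.card]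

lemma kleinColumn_kleinWitness [NeZero L] :
    kleinColumn (kleinWitness L) (-1) = {((-1, -1), 0)} := by
  ext ⟨⟨a, b⟩, i⟩
  grind [kleinColumn, kleinWitness]

lemma sum_kleinPhi_row [NeZero L] {M : Type*} [AddCommGroup M] (f : ZMod L × ZMod L → M) :
    ∑ x : ZMod L, f (kleinPhi L (x, -1)) = ∑ x : ZMod L, f (x, -1) + f (0, 0) - f (0, -1) := by
  have hx : ∀ x : ZMod L, f (kleinPhi L (x, -1)) =
      f (x + 1, -1) + if x = -1 then f (0, 0) - f (0, -1) else 0 := by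
    intro x
    by_cases hx : x = -1
    · subst hx
      simp [kleinPhi_of_eq]
    · simp [kleinPhi_of_ne, hx]
  have hshift : ∑ x : ZMod L, f (x + 1, -1) = ∑ x : ZMod L, f (x, -1) :=
    Equiv.sum_comp (Equiv.addRight (1 : ZMod L)) fun x => f (x, -1)
  rw [sum_congr rfl fun x _ => hx x, sum_add_distrib, hshift, sum_ite_eq']
  simp only [mem_univ, if_true]
  abel

variable [Fact (1 < L)]

lemma fst_ne_kleinTarget (e : (ZMod L × ZMod L) × Fin 2) : e.1 ≠ kleinTarget L e := by
  intro h
  by_cases he : e.2 = 0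
  · have := congrArg Prod.fst h
    rw [kleinTarget_fst, if_pos he] at this
    simp at this
  · have := congrArg Prod.snd h
    simp [kleinTarget, he] at this

lemma kleinIsCycle_coe_iff (T : Finset ((ZMod L × ZMod L) × Fin 2)) :
    kleinIsCycle L ↑T ↔
      ∀ f : ZMod L × ZMod L → ZMod 2, ∑ e ∈ T, (f e.1 + f (kleinTarget L e)) = 0 := by
  rw [← even_card_incident_iff_sum_coboundary_eq_zero _ _ fst_ne_kleinTarget]
  refine forall_congr' fun v => ?_
  rw [← Set.ncard_coe_finset]
  congr!
  ext e
  simp [kleinEnds_eq]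

lemma even_card_kleinColumn_add_sub_one {T : Finset ((ZMod L × ZMod L) × Fin 2)}
    (hT : kleinIsCycle L ↑T) (x : ZMod L) :
    Even (#(kleinColumn T x) + #(kleinColumn T (x - 1))) := by
  rw [kleinIsCycle_coe_iff] at hT
  rw [← ZMod.natCast_eq_zero_iff_even, Nat.cast_add, kleinColumn, kleinColumn,
    natCast_card_filter, natCast_card_filter, ← sum_add_distrib]
  convert hT (fun v => if v.1 = x then 1 else 0) using 2 with e
  rw [kleinTarget_fst]
  rcases e with ⟨⟨a, b⟩, i⟩
  fin_cases i
  · simp [eq_sub_iff_add_eq]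
  · simp only [Fin.mk_one, one_ne_zero, false_and, if_false, add_zero]
    split_ifs <;> decide

lemma even_card_vertical_add_card_seam (hL : Even L) {T : Finset ((ZMod L × ZMod L) × Fin 2)}
    (hT : kleinIsCycle L ↑T) : Even (#{e ∈ T | e.2 = 1} + #(kleinColumn T (-1))) := by
  set π := ZMod.castHom (even_iff_two_dvd.mp hL) (ZMod 2)
  rw [kleinIsCycle_coe_iff] at hT
  rw [← ZMod.natCast_eq_zero_iff_even, Nat.cast_add, kleinColumn,
    natCast_card_filter, natCast_card_filter, ← sum_add_distrib]
  convert hT (fun v => π v.2) using 2 with e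
  rcases e with ⟨⟨a, b⟩, i⟩
  fin_cases i
  · by_cases ha : a = -1 <;>
      simp [kleinTarget, kleinPhi_of_eq, kleinPhi_of_ne, ha, CharTwo.add_self_eq_zero]
  · simp [kleinTarget, ← add_assoc, CharTwo.add_self_eq_zero]

lemma odd_card_kleinColumn {T : Finset ((ZMod L × ZMod L) × Fin 2)} (hT : kleinIsCycle L ↑T)
    (hseam : Odd #(kleinColumn T (-1))) (x : ZMod L) : Odd #(kleinColumn T x) := by
  refine ZMod.forall_of_forall_add_one (P := fun x => Odd #(kleinColumn T x)) hseam
    (fun y hy => ?_) x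
  have hpair := even_card_kleinColumn_add_sub_one hT (y + 1)
  rw [add_sub_cancel_right] at hpair
  exact (Nat.even_add'.mp hpair).mpr hy

lemma add_one_le_card_of_kleinIsCycle (hL : Even L) {T : Finset ((ZMod L × ZMod L) × Fin 2)}
    (hT : kleinIsCycle L ↑T) (hseam : Odd #(kleinColumn T (-1))) : L + 1 ≤ #T := by
  have hhor : L ≤ #{e ∈ T | e.2 = 0} := calc
    L = ∑ _x : ZMod L, 1 := by simp
    _ ≤ ∑ x, #(kleinColumn T x) := sum_le_sum fun x _ => (odd_card_kleinColumn hT hseam x).pos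
    _ = #{e ∈ T | e.2 = 0} := by
      rw [card_eq_sum_card_fiberwise (f := fun e => e.1.1) (t := univ) fun _ _ => mem_univ _]
      simp [kleinColumn, filter_filter]
  have hvert : Odd #{e ∈ T | e.2 = 1} :=
    (Nat.even_add'.mp (even_card_vertical_add_card_seam hL hT)).mpr hseam
  have hsplit : #{e ∈ T | e.2 = 0} + #{e ∈ T | e.2 = 1} = #T := by
    have hne : {e ∈ T | e.2 = 1} = {e ∈ T | ¬e.2 = 0} := filter_congr fun e _ => by grind
    rw [hne, card_filter_add_card_filter_not]
  have := hvert.pos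
  omega

lemma add_one_le_ncard_of_kleinIsCycle (hL : Even L) {S : Set ((ZMod L × ZMod L) × Fin 2)}
    (hS : kleinIsCycle L S) (hseam : Odd (S ∩ kleinSeam L).ncard) : L + 1 ≤ S.ncard := by
  obtain ⟨T, rfl⟩ := S.toFinite.exists_finset_coe
  rw [ncard_coe_inter_kleinSeam] at hseam
  rw [Set.ncard_coe_finset]
  exact add_one_le_card_of_kleinIsCycle hL hS hseam

lemma kleinIsCycle_kleinWitness : kleinIsCycle L ↑(kleinWitness L) := by
  rw [kleinIsCycle_coe_iff]
  intro f
  rw [kleinWitness, sum_insert (by simp), sum_image fun x _ y _ h => by simpa using h]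
  simp only [kleinTarget, one_ne_zero, if_false, if_true, Prod.mk_add_mk, add_zero, neg_add_cancel,
    sum_add_distrib, sum_kleinPhi_row]
  ring_nf
  reduce_mod_char

end KleinLattice

/-- For even `L ≥ 2`, the minimum cardinality of a 1-cycle of the `L × L` Klein-bottle
lattice crossing the seam an odd number of times is exactly `L + 1` (one more than the
length-`L` shortest such cycle on the `L × L` toric lattice), and this bound is
attained. -/
theorem klein_even_distance (L : ℕ) (hL : 2 ≤ L) (hLeven : Even L) :
    IsLeast {k : ℕ | ∃ S : Set ((ZMod L × ZMod L) × Fin 2),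
        kleinIsCycle L S ∧ Odd ((S ∩ kleinSeam L).ncard) ∧ S.ncard = k} (L + 1) := by
  have : Fact (1 < L) := ⟨hL⟩
  refine ⟨⟨kleinWitness L, kleinIsCycle_kleinWitness, ?_, ?_⟩, ?_⟩
  · rw [ncard_coe_inter_kleinSeam, kleinColumn_kleinWitness, card_singleton]
    exact odd_one
  · rw [Set.ncard_coe_finset, card_kleinWitness]
  · rintro k ⟨S, hS, hseam, rfl⟩
    exact add_one_le_ncard_of_kleinIsCycle hLeven hS hseam
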